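/- arXiv:1307.0565 — 2 statements merged into one kernel-verified Lean document; each statement's English description precedes it below -/
import Mathlib

section
/- Let v : \R^n \to \R^n be continuous with H\"older bound |v(x+h)-v(x)| \leq A|h|^{\alpha}, 0 < \alpha \leq 1, and let \eta \in C_c^{\infty}(\R^n) with \int \eta = 1, \eta_k = 2^{nk}\eta(2^k\cdot), P_{\leq k}v = \eta_k * v. Define the Reynolds stress R_{\leq k}^{jl} = P_{\leq k}v^j P_{\leq k}v^l - P_{\leq k}(v^j v^l). Then \|R_{\leq k}\|_{C^0} \leq C A^2 2^{-2\alpha k}, where C depends only on \eta and \alpha. -/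
open MeasureTheory

lemma euclid_abs_coord_le {n : ℕ} (u : EuclideanSpace ℝ (Fin n)) (j : Fin n) :
    ‖u j‖ ≤ ‖u‖ := by
  rw [EuclideanSpace.norm_eq]
  calc ‖u j‖ = Real.sqrt (‖u j‖ ^ 2) := by rw [Real.sqrt_sq (norm_nonneg _)]
    _ ≤ _ := Real.sqrt_le_sqrt
        (Finset.single_le_sum (fun i _ => sq_nonneg ‖u i‖) (Finset.mem_univ j))

/-- Constantin–E–Titi commutator estimate: the Reynolds stress
`R_{≤k}^{jl} = P_{≤k}v^j P_{≤k}v^l - P_{≤k}(v^j v^l)` of a `C^α` vector field satisfies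
`‖R_{≤k}‖_{C^0} ≤ C A² 2^{-2αk}`, with `C` depending only on `η` and `α`. -/
theorem constantin_e_titi_commutator {n : ℕ}
    (η : EuclideanSpace ℝ (Fin n) → ℝ) (α : ℝ)
    (hα0 : 0 < α) (hα1 : α ≤ 1)
    (hη : ContDiff ℝ (⊤ : ℕ∞) η) (hηc : HasCompactSupport η) (hη1 : (∫ h, η h) = 1) :
    ∃ C > 0, ∀ (v : EuclideanSpace ℝ (Fin n) → EuclideanSpace ℝ (Fin n)) (A : ℝ),
      0 ≤ A →
      (∀ x h, ‖v (x + h) - v x‖ ≤ A * ‖h‖ ^ α) →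
      ∀ (k : ℕ) (j l : Fin n) (x : EuclideanSpace ℝ (Fin n)),
        |(∫ h, ((2:ℝ) ^ (n * k) * η ((2:ℝ) ^ k • h)) * v (x - h) j)
            * (∫ h, ((2:ℝ) ^ (n * k) * η ((2:ℝ) ^ k • h)) * v (x - h) l)
          - ∫ h, ((2:ℝ) ^ (n * k) * η ((2:ℝ) ^ k • h)) * (v (x - h) j * v (x - h) l)|
        ≤ C * A ^ 2 * (2:ℝ) ^ (-(2 * α * (k : ℝ))) := by
  set Cα : ℝ := ∫ h : EuclideanSpace ℝ (Fin n), ‖η h‖ * ‖h‖ ^ α with hCαdef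
  set Cβ : ℝ := ∫ h : EuclideanSpace ℝ (Fin n), ‖η h‖ * ‖h‖ ^ (2 * α) with hCβdef
  have hCα0 : 0 ≤ Cα := integral_nonneg fun h => by positivity
  have hCβ0 : 0 ≤ Cβ := integral_nonneg fun h => by positivity
  refine ⟨Cα ^ 2 + Cβ + 1, by positivity, ?_⟩
  intro v A hA hHol k j l x
  -- continuity of `v`
  have hvc : Continuous v := by
    rw [continuous_iff_continuousAt]
    intro x₀
    rw [ContinuousAt, tendsto_iff_norm_sub_tendsto_zero]
    have hb : ∀ y, ‖v y - v x₀‖ ≤ A * ‖y - x₀‖ ^ α := fun y => by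
      simpa using hHol x₀ (y - x₀)
    have h1 : Filter.Tendsto (fun y : EuclideanSpace ℝ (Fin n) => ‖y - x₀‖)
        (nhds x₀) (nhds 0) := by
      simpa using (continuous_id.sub (continuous_const (y := x₀))).norm.tendsto x₀
    have h2 : Filter.Tendsto (fun y : EuclideanSpace ℝ (Fin n) => A * ‖y - x₀‖ ^ α)
        (nhds x₀) (nhds 0) := by
      have := (h1.rpow_const (Or.inr hα0.le)).const_mul A
      simpa [Real.zero_rpow hα0.ne'] using this
    exact squeeze_zero (fun y => norm_nonneg _) hb h2
  set c : ℝ := (2:ℝ) ^ k with hcdef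
  have hc : 0 < c := by positivity
  have hd : (2:ℝ) ^ (n * k) = c ^ n := by rw [hcdef, ← pow_mul, mul_comm]
  simp only [hd]
  -- basic analytic facts about the mollifier at scale `k`
  have hcont1 : Continuous fun h : EuclideanSpace ℝ (Fin n) => η (c • h) := by
    exact Continuous.comp hη.continuous (continuous_const_smul c)
  have hcs1 : HasCompactSupport fun h : EuclideanSpace ℝ (Fin n) => η (c • h) := by
    have := hηc.comp_homeomorph (Homeomorph.smul (isUnit_iff_ne_zero.2 hc.ne').unit
      (α := EuclideanSpace ℝ (Fin n)))
    simpa [Function.comp_def, Units.smul_def] using this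
  have hηkc : Continuous fun h : EuclideanSpace ℝ (Fin n) => c ^ n * η (c • h) :=
    continuous_const.mul hcont1
  have hηks : HasCompactSupport fun h : EuclideanSpace ℝ (Fin n) => c ^ n * η (c • h) :=
    hcs1.mul_left
  have hint : ∀ w : EuclideanSpace ℝ (Fin n) → ℝ, Continuous w →
      Integrable fun h : EuclideanSpace ℝ (Fin n) => (c ^ n * η (c • h)) * w h := fun w hwc =>
    (hηkc.mul hwc).integrable_of_hasCompactSupport hηks.mul_right
  have hw : ∀ m : Fin n, Continuous fun h : EuclideanSpace ℝ (Fin n) => v (x - h) m := fun m =>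
    (continuous_apply m).comp ((PiLp.continuous_ofLp 2 _).comp (hvc.comp (continuous_const.sub continuous_id)))
  have hscale : ∀ f : EuclideanSpace ℝ (Fin n) → ℝ,
      (∫ h, c ^ n * f (c • h)) = ∫ h, f h := by
    intro f
    rw [integral_const_mul, Measure.integral_comp_smul_of_nonneg volume f c (hR := hc.le),
      finrank_euclideanSpace_fin, smul_eq_mul, ← mul_assoc,
      mul_inv_cancel₀ (by positivity), one_mul]
  have hmass : (∫ h, c ^ n * η (c • h)) = 1 := by rw [hscale η, hη1]
  have hmom : ∀ β : ℝ, 0 ≤ β →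
      (∫ h : EuclideanSpace ℝ (Fin n), (c ^ n * ‖η (c • h)‖) * ‖h‖ ^ β)
        = (c ^ β)⁻¹ * ∫ u : EuclideanSpace ℝ (Fin n), ‖η u‖ * ‖u‖ ^ β := by
    intro β hβ
    calc (∫ h : EuclideanSpace ℝ (Fin n), (c ^ n * ‖η (c • h)‖) * ‖h‖ ^ β)
        = ∫ h : EuclideanSpace ℝ (Fin n),
            c ^ n * ((fun u : EuclideanSpace ℝ (Fin n) => ‖η u‖ * ((c⁻¹ * ‖u‖) ^ β)) (c • h)) := by
          congr 1; funext h
          show _ = c ^ n * (‖η (c • h)‖ * ((c⁻¹ * ‖c • h‖) ^ β))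
          rw [norm_smul, Real.norm_eq_abs c, abs_of_pos hc, ← mul_assoc c⁻¹ c,
            inv_mul_cancel₀ hc.ne', one_mul]
          ring
      _ = ∫ u : EuclideanSpace ℝ (Fin n), ‖η u‖ * ((c⁻¹ * ‖u‖) ^ β) := by
          exact hscale fun u => ‖η u‖ * ((c⁻¹ * ‖u‖) ^ β)
      _ = (c ^ β)⁻¹ * ∫ u : EuclideanSpace ℝ (Fin n), ‖η u‖ * ‖u‖ ^ β := by
          rw [← integral_const_mul]
          congr 1; funext u
          rw [Real.mul_rpow (by positivity) (norm_nonneg _), Real.inv_rpow hc.le]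
          ring
  -- integrability of the pieces
  have intη : Integrable fun h : EuclideanSpace ℝ (Fin n) => c ^ n * η (c • h) := by
    simpa using hint (fun _ => 1) continuous_const
  have intj : Integrable fun h : EuclideanSpace ℝ (Fin n) =>
      (c ^ n * η (c • h)) * v (x - h) j := hint _ (hw j)
  have intl : Integrable fun h : EuclideanSpace ℝ (Fin n) =>
      (c ^ n * η (c • h)) * v (x - h) l := hint _ (hw l)
  have intjl : Integrable fun h : EuclideanSpace ℝ (Fin n) =>
      (c ^ n * η (c • h)) * (v (x - h) j * v (x - h) l) := hint _ ((hw j).mul (hw l))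
  -- Hölder bound in coordinates
  have hwb : ∀ (h : EuclideanSpace ℝ (Fin n)) (m : Fin n),
      ‖v (x - h) m - v x m‖ ≤ A * ‖h‖ ^ α := by
    intro h m
    have h1 : ‖v (x - h) m - v x m‖ ≤ ‖v (x - h) - v x‖ := by
      have := euclid_abs_coord_le (v (x - h) - v x) m
      simpa using this
    have h2 : ‖v (x - h) - v x‖ ≤ A * ‖h‖ ^ α := by
      have := hHol x (-h)
      rw [← sub_eq_add_neg, norm_neg] at this
      exact this
    exact h1.trans h2
  -- difference of averaged and pointwise value
  have hD : ∀ m : Fin n,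
      (∫ h : EuclideanSpace ℝ (Fin n), (c ^ n * η (c • h)) * (v (x - h) m - v x m))
        = (∫ h : EuclideanSpace ℝ (Fin n), (c ^ n * η (c • h)) * v (x - h) m) - v x m := by
    intro m
    have heq : (fun h : EuclideanSpace ℝ (Fin n) => (c ^ n * η (c • h)) * (v (x - h) m - v x m))
        = fun h : EuclideanSpace ℝ (Fin n) => (c ^ n * η (c • h)) * v (x - h) m
            - v x m * (c ^ n * η (c • h)) := by funext h; ring
    have i1 : Integrable fun h : EuclideanSpace ℝ (Fin n) =>
        v x m * (c ^ n * η (c • h)) := intη.const_mul _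
    rw [heq, integral_sub (hint _ (hw m)) i1, integral_const_mul, hmass, mul_one]
  -- the key commutator identity (with `B = v x`)
  have key : (∫ h : EuclideanSpace ℝ (Fin n), (c ^ n * η (c • h)) * v (x - h) j)
        * (∫ h : EuclideanSpace ℝ (Fin n), (c ^ n * η (c • h)) * v (x - h) l)
      - (∫ h : EuclideanSpace ℝ (Fin n), (c ^ n * η (c • h)) * (v (x - h) j * v (x - h) l))
      = ((∫ h : EuclideanSpace ℝ (Fin n), (c ^ n * η (c • h)) * v (x - h) j) - v x j)
          * ((∫ h : EuclideanSpace ℝ (Fin n), (c ^ n * η (c • h)) * v (x - h) l) - v x l)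
        - ∫ h : EuclideanSpace ℝ (Fin n), (c ^ n * η (c • h))
            * ((v (x - h) j - v x j) * (v (x - h) l - v x l)) := by
    have expand : (fun h : EuclideanSpace ℝ (Fin n) => (c ^ n * η (c • h))
          * ((v (x - h) j - v x j) * (v (x - h) l - v x l)))
        = fun h : EuclideanSpace ℝ (Fin n) =>
            (c ^ n * η (c • h)) * (v (x - h) j * v (x - h) l)
            - v x l * ((c ^ n * η (c • h)) * v (x - h) j)
            - v x j * ((c ^ n * η (c • h)) * v (x - h) l)
            + (v x j * v x l) * (c ^ n * η (c • h)) := by funext h; ring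
    have i1 : Integrable fun h : EuclideanSpace ℝ (Fin n) =>
        (c ^ n * η (c • h)) * (v (x - h) j * v (x - h) l)
          - v x l * ((c ^ n * η (c • h)) * v (x - h) j) := intjl.sub (intj.const_mul _)
    have i2 : Integrable fun h : EuclideanSpace ℝ (Fin n) =>
        ((c ^ n * η (c • h)) * (v (x - h) j * v (x - h) l)
          - v x l * ((c ^ n * η (c • h)) * v (x - h) j))
          - v x j * ((c ^ n * η (c • h)) * v (x - h) l) := i1.sub (intl.const_mul _)
    have i3 : Integrable fun h : EuclideanSpace ℝ (Fin n) =>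
        (v x j * v x l) * (c ^ n * η (c • h)) := intη.const_mul _
    rw [expand, integral_add i2 i3, integral_sub i1 (intl.const_mul _),
      integral_sub intjl (intj.const_mul _),
      integral_const_mul, integral_const_mul, integral_const_mul, hmass]
    ring
  set s : ℝ := (2:ℝ) ^ (-(α * (k:ℝ))) with hsdef
  have hs : 0 < s := Real.rpow_pos_of_pos (by norm_num) _
  have hca : (c ^ α)⁻¹ = s := by
    rw [hsdef, hcdef, ← Real.rpow_natCast 2 k, ← Real.rpow_mul (by norm_num),
      ← Real.rpow_neg (by norm_num)]
    ring_nf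
  have hcb : (c ^ (2 * α))⁻¹ = s * s := by
    rw [hsdef, hcdef, ← Real.rpow_natCast 2 k, ← Real.rpow_mul (by norm_num),
      ← Real.rpow_neg (by norm_num), ← Real.rpow_add (by norm_num)]
    ring_nf
  have hss : s * s = (2:ℝ) ^ (-(2 * α * (k:ℝ))) := by
    rw [hsdef, ← Real.rpow_add (by norm_num)]
    ring_nf
  -- first moment bound
  have hb1 : ∀ m : Fin n,
      |∫ h : EuclideanSpace ℝ (Fin n), (c ^ n * η (c • h)) * (v (x - h) m - v x m)|
        ≤ A * (s * Cα) := by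
    intro m
    have hgint : Integrable fun h : EuclideanSpace ℝ (Fin n) =>
        (c ^ n * ‖η (c • h)‖) * (A * ‖h‖ ^ α) := by
      apply Continuous.integrable_of_hasCompactSupport
      · exact ((continuous_const.mul hcont1.norm)).mul
          (continuous_const.mul (continuous_norm.rpow_const fun h => Or.inr hα0.le))
      · exact (hcs1.norm.mul_left).mul_right
    rw [← Real.norm_eq_abs]
    calc ‖∫ h : EuclideanSpace ℝ (Fin n), (c ^ n * η (c • h)) * (v (x - h) m - v x m)‖
        ≤ ∫ h : EuclideanSpace ℝ (Fin n), (c ^ n * ‖η (c • h)‖) * (A * ‖h‖ ^ α) := by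
          apply norm_integral_le_of_norm_le hgint
          filter_upwards with h
          rw [norm_mul, norm_mul, Real.norm_eq_abs (c ^ n), abs_of_pos (by positivity)]
          refine mul_le_mul_of_nonneg_left ?_ (by positivity)
          exact hwb h m
      _ = A * ((c ^ α)⁻¹ * Cα) := by
          rw [show (fun h : EuclideanSpace ℝ (Fin n) => (c ^ n * ‖η (c • h)‖) * (A * ‖h‖ ^ α))
              = fun h : EuclideanSpace ℝ (Fin n) => A * ((c ^ n * ‖η (c • h)‖) * ‖h‖ ^ α) from by
                funext h; ring,
            integral_const_mul, hmom α hα0.le]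
      _ = A * (s * Cα) := by rw [hca]
  -- second moment bound
  have hb2 : |∫ h : EuclideanSpace ℝ (Fin n), (c ^ n * η (c • h))
        * ((v (x - h) j - v x j) * (v (x - h) l - v x l))|
      ≤ A ^ 2 * ((s * s) * Cβ) := by
    have hgint : Integrable fun h : EuclideanSpace ℝ (Fin n) =>
        (c ^ n * ‖η (c • h)‖) * (A ^ 2 * ‖h‖ ^ (2 * α)) := by
      apply Continuous.integrable_of_hasCompactSupport
      · exact ((continuous_const.mul hcont1.norm)).mul
          (continuous_const.mul (continuous_norm.rpow_const fun h => Or.inr (by positivity)))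
      · exact (hcs1.norm.mul_left).mul_right
    rw [← Real.norm_eq_abs]
    calc ‖∫ h : EuclideanSpace ℝ (Fin n), (c ^ n * η (c • h))
          * ((v (x - h) j - v x j) * (v (x - h) l - v x l))‖
        ≤ ∫ h : EuclideanSpace ℝ (Fin n), (c ^ n * ‖η (c • h)‖) * (A ^ 2 * ‖h‖ ^ (2 * α)) := by
          apply norm_integral_le_of_norm_le hgint
          filter_upwards with h
          rw [norm_mul, norm_mul, Real.norm_eq_abs (c ^ n), abs_of_pos (by positivity)]
          refine mul_le_mul_of_nonneg_left ?_ (by positivity)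
          have h2α : ‖h‖ ^ (2 * α) = ‖h‖ ^ α * ‖h‖ ^ α := by
            rw [show (2:ℝ) * α = α + α from by ring,
              Real.rpow_add' (norm_nonneg _) (by positivity)]
          rw [norm_mul, h2α]
          calc ‖v (x - h) j - v x j‖ * ‖v (x - h) l - v x l‖
              ≤ (A * ‖h‖ ^ α) * (A * ‖h‖ ^ α) :=
                mul_le_mul (hwb h j) (hwb h l) (norm_nonneg _) (by positivity)
            _ = A ^ 2 * (‖h‖ ^ α * ‖h‖ ^ α) := by ring
      _ = A ^ 2 * ((c ^ (2 * α))⁻¹ * Cβ) := by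
          rw [show (fun h : EuclideanSpace ℝ (Fin n) =>
                (c ^ n * ‖η (c • h)‖) * (A ^ 2 * ‖h‖ ^ (2 * α)))
              = fun h : EuclideanSpace ℝ (Fin n) =>
                A ^ 2 * ((c ^ n * ‖η (c • h)‖) * ‖h‖ ^ (2 * α)) from by
                funext h; ring,
            integral_const_mul, hmom (2 * α) (by positivity)]
      _ = A ^ 2 * ((s * s) * Cβ) := by rw [hcb]
  -- put everything together
  rw [key, ← hD j, ← hD l, ← hss]
  calc |(∫ h : EuclideanSpace ℝ (Fin n), (c ^ n * η (c • h)) * (v (x - h) j - v x j))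
        * (∫ h : EuclideanSpace ℝ (Fin n), (c ^ n * η (c • h)) * (v (x - h) l - v x l))
      - ∫ h : EuclideanSpace ℝ (Fin n), (c ^ n * η (c • h))
          * ((v (x - h) j - v x j) * (v (x - h) l - v x l))|
      ≤ |(∫ h : EuclideanSpace ℝ (Fin n), (c ^ n * η (c • h)) * (v (x - h) j - v x j))
          * (∫ h : EuclideanSpace ℝ (Fin n), (c ^ n * η (c • h)) * (v (x - h) l - v x l))|
        + |∫ h : EuclideanSpace ℝ (Fin n), (c ^ n * η (c • h))
            * ((v (x - h) j - v x j) * (v (x - h) l - v x l))| := abs_sub _ _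
    _ ≤ (A * (s * Cα)) * (A * (s * Cα)) + A ^ 2 * ((s * s) * Cβ) := by
        refine add_le_add ?_ hb2
        rw [abs_mul]
        exact mul_le_mul (hb1 j) (hb1 l) (abs_nonneg _) (by positivity)
    _ = (Cα ^ 2 + Cβ) * A ^ 2 * (s * s) := by ring
    _ ≤ (Cα ^ 2 + Cβ + 1) * A ^ 2 * (s * s) := by
        have h0 : (0:ℝ) ≤ A ^ 2 * (s * s) := by positivity
        nlinarith
end

section
/- Let X, Y be elements of a noncommutative unital ring. Then for every natural number n, (X+Y)^n can be written as a sum, with nonnegative integer coefficients, of terms of the form (\prod_{i=1}^{\ell} ad_X^{r_i}(Y)) X^m, where the sum ranges over \ell \geq 0, nonnegative integers r_1, ..., r_{\ell}, m satisfying r_1 + ... + r_{\ell} + \ell + m = n, and ad_X^r(Y) denotes the r-fold iterated commutator of Y with X. -/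
/-!
Writing left multiplication by `X` as `ad_X + R_X`, where right multiplication `R_X` commutes
with `ad_X`, the binomial theorem gives `X^m Y = ∑ (m choose s) ad_X^s(Y) X^(m-s)`. Hence a
monomial `(∏ ad_X^{rᵢ}(Y)) X^m` times `X + Y` is again an ℕ-combination of such monomials, of
degree one higher, and `(X + Y)^n` is one by induction on `n`.
-/

open Finset

theorem AddSubmonoid.exists_fin_sum_of_mem_closure {M : Type*} [AddCommMonoid M] {s : Set M}
    {x : M} (hx : x ∈ AddSubmonoid.closure s) :
    ∃ (N : ℕ) (f : Fin N → M), (∀ i, f i ∈ s) ∧ x = ∑ i, f i := by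
  obtain ⟨l, hl, rfl⟩ := AddSubmonoid.exists_list_of_mem_closure hx
  exact ⟨l.length, l.get, fun i => hl _ (l.get_mem i), by simp⟩

section Ring

variable {R : Type*} [Ring R]

theorem pow_mul_eq_sum_iterate_commutator_mul_pow (X Y : R) (m : ℕ) :
    X ^ m * Y = ∑ p ∈ antidiagonal m,
      m.choose p.1 • ((fun Z => X * Z - Z * X)^[p.2] Y * X ^ p.1) := by
  set ad := LinearMap.mulLeft ℤ X - LinearMap.mulRight ℤ X
  have had : ⇑ad = fun Z => X * Z - Z * X := rfl
  have hcomm : Commute (LinearMap.mulRight ℤ X) ad :=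
    ((LinearMap.commute_mulLeft_right X X).symm).sub_right (Commute.refl _)
  have hsplit : LinearMap.mulLeft ℤ X = LinearMap.mulRight ℤ X + ad := by
    simp only [ad, add_sub_cancel]
  calc X ^ m * Y = (LinearMap.mulLeft ℤ X ^ m) Y := by rw [LinearMap.pow_mulLeft]; rfl
    _ = _ := by
      rw [hsplit, hcomm.add_pow', LinearMap.sum_apply]
      refine Finset.sum_congr rfl fun p _ => ?_
      rw [LinearMap.smul_apply, Module.End.mul_apply, Module.End.coe_pow ad, had,
        LinearMap.pow_mulRight, LinearMap.mulRight_apply]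

def commutatorMonomial (X Y : R) (L : List ℕ) (m : ℕ) : R :=
  (L.map fun r => (fun Z => X * Z - Z * X)^[r] Y).prod * X ^ m

/-- `ad_X^r(Y)` has degree `r + 1` and `X` has degree `1`. -/
def commutatorMonomials (X Y : R) (n : ℕ) : Set R :=
  {x | ∃ L m, L.sum + L.length + m = n ∧ commutatorMonomial X Y L m = x}

theorem commutatorMonomial_mul_self (X Y : R) (L : List ℕ) (m : ℕ) :
    commutatorMonomial X Y L m * X = commutatorMonomial X Y L (m + 1) := by
  rw [commutatorMonomial, commutatorMonomial, mul_assoc, pow_succ]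

theorem commutatorMonomial_append_singleton (X Y : R) (L : List ℕ) (r k : ℕ) :
    commutatorMonomial X Y (L ++ [r]) k = (L.map fun r => (fun Z => X * Z - Z * X)^[r] Y).prod *
      ((fun Z => X * Z - Z * X)^[r] Y * X ^ k) := by
  rw [commutatorMonomial, List.map_append, List.prod_append, List.map_singleton,
    List.prod_singleton, mul_assoc]

theorem commutatorMonomial_mul_add_mem_closure (X Y : R) {L : List ℕ} {m n : ℕ}
    (h : L.sum + L.length + m = n) :
    commutatorMonomial X Y L m * (X + Y) ∈
      AddSubmonoid.closure (commutatorMonomials X Y (n + 1)) := by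
  have hY : commutatorMonomial X Y L m * Y = ∑ p ∈ antidiagonal m,
      m.choose p.1 • commutatorMonomial X Y (L ++ [p.2]) p.1 := by
    simp only [commutatorMonomial, mul_assoc, pow_mul_eq_sum_iterate_commutator_mul_pow,
      Finset.mul_sum, mul_smul_comm, ← commutatorMonomial_append_singleton]
  rw [mul_add, commutatorMonomial_mul_self, hY]
  have hmem : ∀ {L' : List ℕ} {m' : ℕ}, L'.sum + L'.length + m' = n + 1 →
      commutatorMonomial X Y L' m' ∈ AddSubmonoid.closure (commutatorMonomials X Y (n + 1)) :=
    fun h' => AddSubmonoid.subset_closure ⟨_, _, h', rfl⟩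
  refine add_mem (hmem (by omega)) (sum_mem fun p hp => nsmul_mem (hmem ?_) _)
  have := mem_antidiagonal.mp hp
  simp only [List.sum_append, List.length_append, List.sum_singleton, List.length_singleton]
  omega

theorem mul_add_mem_closure_commutatorMonomials (X Y : R) {n : ℕ} {x : R}
    (hx : x ∈ AddSubmonoid.closure (commutatorMonomials X Y n)) :
    x * (X + Y) ∈ AddSubmonoid.closure (commutatorMonomials X Y (n + 1)) := by
  induction hx using AddSubmonoid.closure_induction with
  | mem x hx =>
    obtain ⟨L, m, h, rfl⟩ := hx
    exact commutatorMonomial_mul_add_mem_closure X Y h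
  | zero => simp
  | add x y _ _ hx hy => simpa only [add_mul] using add_mem hx hy

theorem add_pow_mem_closure_commutatorMonomials (X Y : R) (n : ℕ) :
    (X + Y) ^ n ∈ AddSubmonoid.closure (commutatorMonomials X Y n) := by
  induction n with
  | zero => exact AddSubmonoid.subset_closure ⟨[], 0, rfl, by simp [commutatorMonomial]⟩
  | succ n ih => simpa only [pow_succ] using mul_add_mem_closure_commutatorMonomials X Y ih

end Ring

/-- Expansion of `(X+Y)^n` in a noncommutative ring as a nonnegative-integer combination of
terms `(∏_i ad_X^{r_i}(Y)) X^m` with `r_1 + ⋯ + r_ℓ + ℓ + m = n`. -/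
theorem power_of_sum_commutator_expansion {R : Type*} [Ring R] (X Y : R) (n : ℕ) :
    ∃ (N : ℕ) (c : Fin N → ℕ) (L : Fin N → List ℕ) (m : Fin N → ℕ),
      (∀ i, (L i).sum + (L i).length + m i = n) ∧
      (X + Y) ^ n =
        ∑ i, (c i : R) *
          (((L i).map (fun r => (fun Z => X * Z - Z * X)^[r] Y)).prod * X ^ (m i)) := by
  obtain ⟨N, f, hf, hsum⟩ := AddSubmonoid.exists_fin_sum_of_mem_closure
    (add_pow_mem_closure_commutatorMonomials X Y n)
  choose L m hdeg hf using hf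
  refine ⟨N, fun _ => 1, L, m, hdeg, ?_⟩
  simp only [Nat.cast_one, one_mul, hsum, ← hf, commutatorMonomial]
end
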